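/- The derivations ℒ₀, ℒ₁, ℒ₂ of ℂ[x₂,x₃,x₄] satisfy the commutation relations [ℒ₀, ℒ₁] = ℒ₁, [ℒ₀, ℒ₂] = 2ℒ₂, and [ℒ₁, ℒ₂] = x₂·ℒ₁, i.e. for every polynomial P ∈ ℂ[x₂,x₃,x₄] one has ℒ₀(ℒ₁P) − ℒ₁(ℒ₀P) = ℒ₁P, ℒ₀(ℒ₂P) − ℒ₂(ℒ₀P) = 2ℒ₂P, and ℒ₁(ℒ₂P) − ℒ₂(ℒ₁P) = x₂·ℒ₁P. -/

import Mathlib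

/-!
The commutator of two derivations is again a derivation, and a derivation of a polynomial ring is
determined by its values on the variables. Writing each ℒᵢ as the derivation `∑ aⱼ ∂/∂xⱼ`, every
relation therefore reduces to three polynomial identities, one for each of x₂, x₃, x₄.
-/

open MvPolynomial

noncomputable section

/-- The polynomial ring ℂ[x₂,x₃,x₄]; `X 0 = x₂`, `X 1 = x₃`, `X 2 = x₄`. -/
abbrev R3 : Type := MvPolynomial (Fin 3) ℂ

def x2 : R3 := X 0
def x3 : R3 := X 1
def x4 : R3 := X 2

/-- ℒ₀ = 2x₂∂/∂x₂ + 3x₃∂/∂x₃ + 4x₄∂/∂x₄ -/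
def L0 (P : R3) : R3 :=
  2 * x2 * pderiv (0 : Fin 3) P + 3 * x3 * pderiv (1 : Fin 3) P + 4 * x4 * pderiv (2 : Fin 3) P

/-- ℒ₁ = x₃∂/∂x₂ + x₄∂/∂x₃ + 12x₂x₃∂/∂x₄ -/
def L1 (P : R3) : R3 :=
  x3 * pderiv (0 : Fin 3) P + x4 * pderiv (1 : Fin 3) P + 12 * x2 * x3 * pderiv (2 : Fin 3) P

/-- ℒ₂ = ((2/3)x₄ − 2x₂²)∂/∂x₂ + 3x₂x₃∂/∂x₃ + (3x₃² + 2x₂x₄)∂/∂x₄ -/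
def L2 (P : R3) : R3 :=
  (C (2/3 : ℂ) * x4 - 2 * x2 ^ 2) * pderiv (0 : Fin 3) P + 3 * x2 * x3 * pderiv (1 : Fin 3) P
    + (3 * x3 ^ 2 + 2 * x2 * x4) * pderiv (2 : Fin 3) P

@[simp]
theorem Derivation.map_ofNat {R A M : Type*} [CommSemiring R] [CommSemiring A] [AddCommMonoid M]
    [Algebra R A] [Module A M] [Module R M] (D : Derivation R A M) (n : ℕ) [n.AtLeastTwo] :
    D (ofNat(n) : A) = 0 :=
  D.map_natCast n

namespace MvPolynomial

variable {R σ : Type*} [CommSemiring R] [Fintype σ]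

def vectorField (a : σ → MvPolynomial σ R) :
    Derivation R (MvPolynomial σ R) (MvPolynomial σ R) :=
  ∑ i, a i • pderiv i

theorem vectorField_apply (a : σ → MvPolynomial σ R) (P : MvPolynomial σ R) :
    vectorField a P = ∑ i, a i * pderiv i P := by
  rw [vectorField, ← Derivation.coeFnAddMonoidHom_apply, map_sum, Finset.sum_apply]
  rfl

@[simp]
theorem vectorField_X (a : σ → MvPolynomial σ R) (i : σ) : vectorField a (X i) = a i := by
  classical simp [vectorField_apply, pderiv_X, Pi.single_apply]

end MvPolynomial

def derivL0 : Derivation ℂ R3 R3 := vectorField ![2 * x2, 3 * x3, 4 * x4]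

def derivL1 : Derivation ℂ R3 R3 := vectorField ![x3, x4, 12 * x2 * x3]

def derivL2 : Derivation ℂ R3 R3 :=
  vectorField ![C (2/3 : ℂ) * x4 - 2 * x2 ^ 2, 3 * x2 * x3, 3 * x3 ^ 2 + 2 * x2 * x4]

theorem coe_derivL0 : ⇑derivL0 = L0 := by
  ext1 P
  simp [derivL0, L0, vectorField_apply, Fin.sum_univ_three]

theorem coe_derivL1 : ⇑derivL1 = L1 := by
  ext1 P
  simp [derivL1, L1, vectorField_apply, Fin.sum_univ_three]

theorem coe_derivL2 : ⇑derivL2 = L2 := by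
  ext1 P
  simp [derivL2, L2, vectorField_apply, Fin.sum_univ_three]

theorem three_mul_C_two_thirds : (3 : R3) * C (2 / 3) = 2 := by
  rw [← map_ofNat C 3, ← map_mul, ← map_ofNat C 2]
  norm_num

theorem lie_derivL0_derivL1 : ⁅derivL0, derivL1⁆ = derivL1 := by
  refine derivation_ext fun i => ?_
  fin_cases i <;>
    simp [Derivation.commutator_apply, derivL0, derivL1, x2, x3, x4, Derivation.leibniz] <;> ring

theorem lie_derivL0_derivL2 : ⁅derivL0, derivL2⁆ = (2 : R3) • derivL2 := by
  refine derivation_ext fun i => ?_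
  fin_cases i <;>
    simp [Derivation.commutator_apply, derivL0, derivL2, x2, x3, x4, Derivation.leibniz] <;> ring

theorem lie_derivL1_derivL2 : ⁅derivL1, derivL2⁆ = x2 • derivL1 := by
  refine derivation_ext fun i => ?_
  fin_cases i <;>
    simp [Derivation.commutator_apply, derivL1, derivL2, x2, x3, x4, Derivation.leibniz]
  · linear_combination 4 * X 0 * X 1 * three_mul_C_two_thirds
  · ring
  · linear_combination -4 * X 1 * X 2 * three_mul_C_two_thirds

theorem commutation_relations :
    (∀ P : R3, L0 (L1 P) - L1 (L0 P) = L1 P) ∧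
    (∀ P : R3, L0 (L2 P) - L2 (L0 P) = 2 * L2 P) ∧
    (∀ P : R3, L1 (L2 P) - L2 (L1 P) = x2 * L1 P) := by
  refine ⟨fun P => ?_, fun P => ?_, fun P => ?_⟩
  · simpa [Derivation.commutator_apply, coe_derivL0, coe_derivL1] using
      DFunLike.congr_fun lie_derivL0_derivL1 P
  · simpa [Derivation.commutator_apply, coe_derivL0, coe_derivL2] using
      DFunLike.congr_fun lie_derivL0_derivL2 P
  · simpa [Derivation.commutator_apply, coe_derivL1, coe_derivL2] using
      DFunLike.congr_fun lie_derivL1_derivL2 P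

end
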